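/- arXiv:math/0508308 — 2 statements merged into one kernel-verified Lean document; each statement's English description precedes it below -/
import Mathlib

section
/- Let R be a commutative ring and x a variable over R. Let 0 ≤ a₁ < a₂ < ⋯ < a_p be integers, and for each 1 ≤ k ≤ p let J_k be an ideal of R, with J_k^e denoting the extension J_k·R[x]. Then in R[x] one has the equality of ideals: x^{a₁}J₁^e + x^{a₂}J₂^e + ⋯ + x^{a_p}J_p^e = x^{a₁}·((J₁^e + (x^{a₂−a₁})) ∩ (J₁^e + J₂^e + (x^{a₃−a₁})) ∩ ⋯ ∩ (J₁^e + ⋯ + J_{p−1}^e + (x^{a_p−a₁})) ∩ (J₁^e + ⋯ + J_p^e)). -/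
/-!
After factoring out `X ^ a 0`, put `b k = a k - a 0` and `Sₖ = J₀ + ⋯ + J_{k-1}`. Membership in
`Sₖ^e + (X ^ b k)` only constrains the coefficients of degree `< b k`: they must lie in `Sₖ`. So for
`f` in the intersection and any degree `n`, taking for `k` the first index with `n < b k` (or `p` if
there is none) puts `f.coeff n` in `Sₖ` while `b i ≤ n` for all `i < k`; hence the monomial of
degree `n` of `f` lies in `∑_{i<k} X ^ b i • Jᵢ^e`. The other inclusion holds term by term because
`b` is monotone.
-/

open Polynomial Finset

theorem Ideal.map_sum {R S ι : Type*} [CommSemiring R] [CommSemiring S] (f : R →+* S)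
    (s : Finset ι) (I : ι → Ideal R) : (∑ i ∈ s, I i).map f = ∑ i ∈ s, (I i).map f :=
  _root_.map_sum (Ideal.mapHom f) I s

namespace Polynomial

variable {R : Type*} [CommRing R]

theorem coeff_mem_of_mem_map_C_add_span_X_pow {I : Ideal R} {m n : ℕ} {f : R[X]}
    (hf : f ∈ I.map C + Ideal.span {X ^ m}) (hn : n < m) : f.coeff n ∈ I := by
  obtain ⟨g, hg, h, hh, rfl⟩ := Submodule.mem_sup.mp hf
  rw [coeff_add, X_pow_dvd_iff.mp (Ideal.mem_span_singleton.mp hh) n hn, add_zero]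
  exact Ideal.mem_map_C_iff.mp hg n

variable (J : ℕ → Ideal R) (b : ℕ → ℕ) {p : ℕ}

theorem exists_coeff_mem_sum_of_mem_inf {f : R[X]}
    (hf : f ∈ (range p).inf (fun k ↦ (∑ i ∈ range k, (J i).map C) + Ideal.span {X ^ b k})
      ⊓ ∑ i ∈ range p, (J i).map C) (n : ℕ) :
    ∃ m ≤ p, (∀ i < m, b i ≤ n) ∧ f.coeff n ∈ ∑ i ∈ range m, J i := by
  classical
  simp only [Submodule.mem_inf, Submodule.mem_finsetInf, mem_range, ← Ideal.map_sum] at hf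
  by_cases h : ∃ k < p, n < b k
  · obtain ⟨hk, hnk⟩ := Nat.find_spec h
    refine ⟨Nat.find h, hk.le, fun i hi ↦ ?_, coeff_mem_of_mem_map_C_add_span_X_pow (hf.1 _ hk) hnk⟩
    by_contra! hbi
    exact (Nat.find_min' h ⟨hi.trans hk, hbi⟩).not_gt hi
  · push Not at h
    exact ⟨p, le_rfl, h, Ideal.mem_map_C_iff.mp hf.2 n⟩

theorem C_mul_X_pow_mem_sum_span_X_pow_mul {m n : ℕ} (hmp : m ≤ p)
    (hbn : ∀ i < m, b i ≤ n) {r : R} (hr : r ∈ ∑ i ∈ range m, J i) :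
    C r * X ^ n ∈ ∑ k ∈ range p, Ideal.span {X ^ b k} * (J k).map C := by
  have hmem : C r * X ^ n ∈ (∑ i ∈ range m, J i).map C * Ideal.span {X ^ n} :=
    Ideal.mul_mem_mul (Ideal.mem_map_of_mem C hr) (Ideal.mem_span_singleton_self _)
  have hle : (∑ i ∈ range m, J i).map C * Ideal.span {X ^ n} ≤
      ∑ k ∈ range p, Ideal.span {X ^ b k} * (J k).map C := by
    calc
      _ = ∑ i ∈ range m, Ideal.span {X ^ n} * (J i).map C := by
        rw [Ideal.map_sum, sum_mul]
        exact sum_congr rfl fun i _ ↦ mul_comm _ _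
      _ ≤ ∑ i ∈ range m, Ideal.span {X ^ b i} * (J i).map C :=
        sum_le_sum fun i hi ↦ Ideal.mul_mono_left <| Ideal.span_singleton_le_span_singleton.mpr <|
          pow_dvd_pow X (hbn i (mem_range.mp hi))
      _ ≤ ∑ k ∈ range p, Ideal.span {X ^ b k} * (J k).map C :=
        sum_le_sum_of_subset (range_subset_range.mpr hmp)
  exact hle hmem

theorem span_X_pow_mul_map_C_le_inf (hb : MonotoneOn b (Set.Iio p)) {k : ℕ}
    (hk : k < p) :
    Ideal.span {X ^ b k} * (J k).map C ≤
      (range p).inf (fun m ↦ (∑ i ∈ range m, (J i).map C) + Ideal.span {X ^ b m})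
        ⊓ ∑ i ∈ range p, (J i).map C := by
  have hJ : ∀ {m}, k < m → Ideal.span {X ^ b k} * (J k).map C ≤ ∑ i ∈ range m, (J i).map C :=
    fun hkm ↦ Ideal.mul_le_right.trans <|
      single_le_sum (f := fun i ↦ (J i).map C) (fun _ _ ↦ bot_le) (mem_range.mpr hkm)
  refine le_inf (Finset.le_inf fun m hm ↦ ?_) (hJ hk)
  rcases le_or_gt m k with hmk | hkm
  · refine le_sup_of_le_right (Ideal.mul_le_left.trans ?_)
    exact Ideal.span_singleton_le_span_singleton.mpr <|
      pow_dvd_pow X (hb (hmk.trans_lt hk) hk hmk)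
  · exact le_sup_of_le_left (hJ hkm)

theorem sum_span_X_pow_mul_map_C_eq_inf (hb : MonotoneOn b (Set.Iio p)) :
    ∑ k ∈ range p, Ideal.span {X ^ b k} * (J k).map C =
      (range p).inf (fun k ↦ (∑ i ∈ range k, (J i).map C) + Ideal.span {X ^ b k})
        ⊓ ∑ i ∈ range p, (J i).map C := by
  refine le_antisymm ?_ fun f hf ↦ ?_
  · rw [Ideal.sum_eq_sup]
    exact Finset.sup_le fun k hk ↦ span_X_pow_mul_map_C_le_inf J b hb (mem_range.mp hk)
  rw [f.as_sum_support_C_mul_X_pow]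
  refine Ideal.sum_mem _ fun n _ ↦ ?_
  obtain ⟨m, hmp, hbn, hcoeff⟩ := exists_coeff_mem_sum_of_mem_inf J b hf n
  exact C_mul_X_pow_mem_sum_span_X_pow_mul J b hmp hbn hcoeff

end Polynomial

/-- **Lemma on intersecting ideals in `R[x]`.**
Let `R` be a commutative ring and `x` a variable over `R`. Let
`0 ≤ a₁ < a₂ < ⋯ < a_p` and for each `k` let `J_k` be an ideal of `R`,
with `J_k^e` its extension to `R[x]`.  Then
`x^{a₁}J₁^e + ⋯ + x^{a_p}J_p^e
  = x^{a₁}·((J₁^e + (x^{a₂−a₁})) ∩ ⋯ ∩ (J₁^e + ⋯ + J_{p−1}^e + (x^{a_p−a₁}))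
      ∩ (J₁^e + ⋯ + J_p^e))`. -/
theorem intersecting_ideals {R : Type*} [CommRing R] (p : ℕ) (hp : 0 < p)
    (a : ℕ → ℕ) (ha : ∀ i j, i < j → j < p → a i < a j)
    (J : ℕ → Ideal R) :
    (∑ k ∈ Finset.range p,
        Ideal.span {(X : R[X]) ^ a k} * (J k).map (C : R →+* R[X]))
      = Ideal.span {(X : R[X]) ^ a 0} *
        (((Finset.Ico 1 p).inf fun k =>
            (∑ i ∈ Finset.range k, (J i).map (C : R →+* R[X]))
              + Ideal.span {(X : R[X]) ^ (a k - a 0)})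
          ⊓ ∑ i ∈ Finset.range p, (J i).map (C : R →+* R[X])) := by
  have ha_mono : MonotoneOn a (Set.Iio p) :=
    StrictMonoOn.monotoneOn fun i _ j hj hij ↦ ha i j hij hj
  have hshift : ∀ k ∈ range p, Ideal.span {(X : R[X]) ^ a k} * (J k).map C =
      Ideal.span {X ^ a 0} * (Ideal.span {X ^ (a k - a 0)} * (J k).map C) := by
    intro k hk
    have h0k : a 0 ≤ a k := ha_mono hp (mem_range.mp hk) (Nat.zero_le k)
    rw [← mul_assoc, Ideal.span_singleton_mul_span_singleton, ← pow_add, Nat.add_sub_cancel' h0k]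
  have hb_mono : MonotoneOn (fun k ↦ a k - a 0) (Set.Iio p) :=
    fun i hi j hj hij ↦ Nat.sub_le_sub_right (ha_mono hi hj hij) (a 0)
  rw [sum_congr rfl hshift, ← mul_sum, sum_span_X_pow_mul_map_C_eq_inf J _ hb_mono, range_eq_Ico,
    ← insert_Ico_add_one_left_eq_Ico hp, inf_insert]
  -- the factor for `k = 0` is `⊥ + (X ^ 0) = ⊤`
  simp
end

section
/- For a saturated homogeneous ideal I ⊆ ℂ[x₀,…,x_n] and integers d with Z_d = Z_{d+1} (the d- and (d+1)-envelopes agree, equivalently the ideals generated by I_d and I_{d+1} have the same saturation), the quotient ideal sheaves on the blowup X = Bl₀(ℂ^{n+1}) satisfy 𝓘'_d = 𝓘'_{d+1}, where 𝓘'_d = (I_d·O_X : O_X(−dE)) and E is the exceptional divisor. Moreover 𝓘'_d ⊆ 𝓘'_{d+1} always, and I_d·O_X = O_X(−dE)·𝓘'_d for every d. -/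
/-!
Proof idea: for homogeneous `f` of degree `d` the chart map sends `f` to `z_m^d · f(1, z)`,
so `I_d·O_X = (z_m^d)·I'_d` with `I'_d` the dehomogenization of `I_d`, and `𝓘'_d = I'_d`
since `z_m^d` is a nonzerodivisor. Dehomogenization does not see saturation: if
`f · x_m^N ∈ J` then `f(1, z) ∈ J(1, z)`. Hence `I'_d` depends only on the saturation of
`(I_d)`, and `I_d·x_m ⊆ I_{d+1}` gives `I'_d ⊆ I'_{d+1}`.
-/

open MvPolynomial

noncomputable section

/-- The irrelevant ideal `(x₀,…,x_n)` of `ℂ[x₀,…,x_n]`. -/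
def irrN (n : ℕ) : Ideal (MvPolynomial (Fin (n + 1)) ℂ) :=
  Ideal.span (Set.range (X : Fin (n + 1) → MvPolynomial (Fin (n + 1)) ℂ))

/-- Saturation of a homogeneous ideal with respect to the irrelevant ideal. -/
def satN (n : ℕ) (J : Ideal (MvPolynomial (Fin (n + 1)) ℂ)) :
    Ideal (MvPolynomial (Fin (n + 1)) ℂ) :=
  ⨆ N : ℕ, J.colon ((irrN n ^ N : Ideal (MvPolynomial (Fin (n + 1)) ℂ)) : Set (MvPolynomial (Fin (n + 1)) ℂ))

/-- The ideal generated by the degree-`d` piece `I_d` of `I`. -/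
def pieceSpanN (n : ℕ) (I : Ideal (MvPolynomial (Fin (n + 1)) ℂ)) (d : ℕ) :
    Ideal (MvPolynomial (Fin (n + 1)) ℂ) :=
  Ideal.span {f | f ∈ I ∧ f.IsHomogeneous d}

/-- `d` is a geometric generating degree of `I`: the `d`-envelope differs from the
`(d-1)`-envelope, i.e. the saturations of the ideals generated by `I_d` and `I_{d-1}`
differ. -/
def IsGGDN (n : ℕ) (I : Ideal (MvPolynomial (Fin (n + 1)) ℂ)) (d : ℕ) : Prop :=
  satN n (pieceSpanN n I d) ≠ satN n (pieceSpanN n I (d - 1))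

/-- The zero locus in `ℙⁿ` of a set of (homogeneous) polynomials. -/
def projZeroLocusN (n : ℕ) (T : Set (MvPolynomial (Fin (n + 1)) ℂ)) :
    Set (Projectivization ℂ (Fin (n + 1) → ℂ)) :=
  {p | ∀ f ∈ T, eval p.rep f = 0}

end

noncomputable section

/-- The `m`-th standard coordinate chart of the blowup `Bl₀(ℂ^{n+1})`, as a
ring map on coordinate rings: `x_m ↦ z_m`, `x_i ↦ z_m z_i` for `i ≠ m`.  The
exceptional divisor `E` is cut out by `z_m` in this chart. -/
def blowChart (n : ℕ) (m : Fin (n + 1)) :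
    MvPolynomial (Fin (n + 1)) ℂ →+* MvPolynomial (Fin (n + 1)) ℂ :=
  (aeval fun i : Fin (n + 1) =>
    if i = m then (X m : MvPolynomial (Fin (n + 1)) ℂ) else X m * X i).toRingHom

/-- In the chart, `𝓘'_d = (I_d·O_X : O_X(−dE))` is the colon ideal of the
pullback of `I_d` by `(z_m^d)`. -/
def chartColon (n : ℕ) (m : Fin (n + 1))
    (I : Ideal (MvPolynomial (Fin (n + 1)) ℂ)) (d : ℕ) :
    Ideal (MvPolynomial (Fin (n + 1)) ℂ) :=
  (Ideal.map (blowChart n m) (pieceSpanN n I d)).colon ((Ideal.span {X m ^ d} : Ideal (MvPolynomial (Fin (n + 1)) ℂ)) :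
    Set (MvPolynomial (Fin (n + 1)) ℂ))

theorem Ideal.span_singleton_mul_colon_span_singleton {R : Type*} [CommSemiring R] {a : R}
    (ha : IsLeftRegular a) (J : Ideal R) :
    (Ideal.span {a} * J).colon (Ideal.span {a} : Set R) = J := by
  ext x
  rw [Ideal.mem_colon_span_singleton, Ideal.mem_span_singleton_mul]
  constructor
  · rintro ⟨z, hz, hzx⟩
    rwa [← ha (hzx.trans (mul_comm x a))]
  · exact fun hx => ⟨x, hx, mul_comm a x⟩

namespace MvPolynomial

variable {σ R S : Type*} [CommSemiring R] [CommSemiring S] [Algebra R S]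

theorem IsHomogeneous.aeval_mul_left {φ : MvPolynomial σ R} {d : ℕ} (hφ : φ.IsHomogeneous d)
    (p : S) (g : σ → S) :
    MvPolynomial.aeval (fun i => p * g i) φ = p ^ d * MvPolynomial.aeval g φ := by
  conv_lhs => rw [φ.as_sum]
  conv_rhs => rw [φ.as_sum]
  rw [map_sum, map_sum, Finset.mul_sum]
  refine Finset.sum_congr rfl fun s hs => ?_
  have hdeg : ∑ i ∈ s.support, s i = d := by
    simpa [Finsupp.weight_apply, Finsupp.sum] using hφ (mem_support_iff.mp hs)
  rw [aeval_monomial, aeval_monomial, Finsupp.prod, Finsupp.prod]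
  simp_rw [mul_pow]
  rw [Finset.prod_mul_distrib, Finset.prod_pow_eq_pow_sum, hdeg]
  ring

variable [DecidableEq σ]

def dehomogenize (m : σ) : MvPolynomial σ R →ₐ[R] MvPolynomial σ R :=
  aeval fun i => if i = m then 1 else X i

@[simp]
theorem dehomogenize_X_self (m : σ) : dehomogenize (R := R) m (X m) = 1 := by
  simp [dehomogenize]

end MvPolynomial

section Chart

variable {n : ℕ} (m : Fin (n + 1))

theorem blowChart_eq_X_pow_mul_dehomogenize {f : MvPolynomial (Fin (n + 1)) ℂ} {d : ℕ}
    (hf : f.IsHomogeneous d) : blowChart n m f = X m ^ d * dehomogenize m f := by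
  have hchart : (fun i : Fin (n + 1) =>
        if i = m then (X m : MvPolynomial (Fin (n + 1)) ℂ) else X m * X i)
      = fun i => X m * (if i = m then 1 else X i) := by
    funext i
    split_ifs <;> simp
  exact (congrArg (aeval · f) hchart).trans (hf.aeval_mul_left _ _)

theorem map_blowChart_pieceSpanN (I : Ideal (MvPolynomial (Fin (n + 1)) ℂ)) (d : ℕ) :
    Ideal.map (blowChart n m) (pieceSpanN n I d)
      = Ideal.span {X m ^ d} * Ideal.map (dehomogenize m) (pieceSpanN n I d) := by
  rw [pieceSpanN, Ideal.map_span, Ideal.map_span, Ideal.span_mul_span', Set.singleton_mul,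
    ← Set.image_comp]
  exact congrArg _ (Set.image_congr fun f hf => blowChart_eq_X_pow_mul_dehomogenize m hf.2)

theorem chartColon_eq_map_dehomogenize (I : Ideal (MvPolynomial (Fin (n + 1)) ℂ)) (d : ℕ) :
    chartColon n m I d = Ideal.map (dehomogenize m) (pieceSpanN n I d) := by
  rw [chartColon, map_blowChart_pieceSpanN]
  exact Ideal.span_singleton_mul_colon_span_singleton
    (IsRegular.of_ne_zero (pow_ne_zero d (X_ne_zero m))).left _

theorem map_dehomogenize_pieceSpanN_le_succ (I : Ideal (MvPolynomial (Fin (n + 1)) ℂ)) (d : ℕ) :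
    Ideal.map (dehomogenize m) (pieceSpanN n I d)
      ≤ Ideal.map (dehomogenize m) (pieceSpanN n I (d + 1)) := by
  rw [pieceSpanN, Ideal.map_span, Ideal.span_le]
  rintro _ ⟨f, ⟨hfI, hfd⟩, rfl⟩
  have hfX : f * X m ∈ pieceSpanN n I (d + 1) :=
    Ideal.subset_span ⟨I.mul_mem_right _ hfI, hfd.mul (isHomogeneous_X ℂ m)⟩
  simpa using Ideal.mem_map_of_mem (dehomogenize m) hfX

end Chart

section Saturation

variable {n : ℕ}

theorem le_satN (J : Ideal (MvPolynomial (Fin (n + 1)) ℂ)) : J ≤ satN n J := by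
  refine le_trans (fun f hf => ?_) (le_iSup _ 0)
  exact Submodule.mem_colon.mpr fun p _ => J.mul_mem_right p hf

theorem exists_mul_X_pow_mem_of_mem_satN {J : Ideal (MvPolynomial (Fin (n + 1)) ℂ)}
    {f : MvPolynomial (Fin (n + 1)) ℂ} (hf : f ∈ satN n J) (m : Fin (n + 1)) :
    ∃ N : ℕ, f * X m ^ N ∈ J := by
  have hdir : Directed (· ≤ ·) fun N : ℕ =>
      J.colon ((irrN n ^ N : Ideal (MvPolynomial (Fin (n + 1)) ℂ)) : Set _) :=
    Monotone.directed_le fun a b hab =>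
      Submodule.colon_mono le_rfl (SetLike.coe_subset_coe.mpr (Ideal.pow_le_pow_right hab))
  obtain ⟨N, hN⟩ := (Submodule.mem_iSup_of_directed _ hdir).mp hf
  have hXN : (X m : MvPolynomial (Fin (n + 1)) ℂ) ^ N ∈ irrN n ^ N :=
    Ideal.pow_mem_pow (Ideal.subset_span (Set.mem_range_self m)) N
  exact ⟨N, by simpa [smul_eq_mul] using Submodule.mem_colon.mp hN _ hXN⟩

theorem map_dehomogenize_satN (m : Fin (n + 1)) (J : Ideal (MvPolynomial (Fin (n + 1)) ℂ)) :
    Ideal.map (dehomogenize m) (satN n J) = Ideal.map (dehomogenize m) J := by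
  refine le_antisymm ?_ (Ideal.map_mono (le_satN J))
  rw [Ideal.map_le_iff_le_comap]
  intro f hf
  obtain ⟨N, hN⟩ := exists_mul_X_pow_mem_of_mem_satN hf m
  simpa using Ideal.mem_map_of_mem (dehomogenize m) hN

end Saturation

theorem chart_colon_ideal_properties_general (n : ℕ)
    (I : Ideal (MvPolynomial (Fin (n + 1)) ℂ))
    (m : Fin (n + 1)) :
    (∀ d : ℕ, Ideal.map (blowChart n m) (pieceSpanN n I d)
        = Ideal.span {X m ^ d} * chartColon n m I d) ∧
    (∀ d : ℕ, chartColon n m I d ≤ chartColon n m I (d + 1)) ∧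
    (∀ d : ℕ, satN n (pieceSpanN n I d) = satN n (pieceSpanN n I (d + 1)) →
        chartColon n m I d = chartColon n m I (d + 1)) := by
  simp only [chartColon_eq_map_dehomogenize]
  refine ⟨map_blowChart_pieceSpanN m I, map_dehomogenize_pieceSpanN_le_succ m I, fun d hsat => ?_⟩
  rw [← map_dehomogenize_satN m, hsat, map_dehomogenize_satN]

/-- **Properties of the quotient ideal sheaves `𝓘'_d` on `Bl₀(ℂ^{n+1})`,**
verified on each standard chart of the blowup.  For a saturated homogeneous
ideal `I ⊆ ℂ[x₀,…,x_n]`: (1) `I_d·O_X = O_X(−dE)·𝓘'_d` for every `d`;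
(2) `𝓘'_d ⊆ 𝓘'_{d+1}`; (3) if the `d`- and `(d+1)`-envelopes agree (the
ideals generated by `I_d` and `I_{d+1}` have the same saturation), then
`𝓘'_d = 𝓘'_{d+1}`. -/
theorem chart_colon_ideal_properties (n : ℕ)
    (I : Ideal (MvPolynomial (Fin (n + 1)) ℂ))
    (hIh : I = Ideal.span {f | f ∈ I ∧ ∃ k, f.IsHomogeneous k})
    (hsat : satN n I = I) (m : Fin (n + 1)) :
    (∀ d : ℕ, Ideal.map (blowChart n m) (pieceSpanN n I d)
        = Ideal.span {X m ^ d} * chartColon n m I d) ∧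
    (∀ d : ℕ, chartColon n m I d ≤ chartColon n m I (d + 1)) ∧
    (∀ d : ℕ, satN n (pieceSpanN n I d) = satN n (pieceSpanN n I (d + 1)) →
        chartColon n m I d = chartColon n m I (d + 1)) :=
  chart_colon_ideal_properties_general n I m

end
end
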